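/- arXiv:1410.7975 — 2 statements merged into one kernel-verified Lean document; each statement's English description precedes it below -/
import Mathlib

section
/- Gát's formula for the Fejér kernel of the Walsh system at dyadic indices: let A > t be nonnegative integers and x ∈ I_t \ I_{t+1} (i.e. x_0 = ... = x_{t-1} = 0, x_t = 1). Then K_{2^A}(x) = 2^{t-1} if x ∈ I_A(e_t), K_{2^A}(x) = (2^A + 1)/2 if x ∈ I_A, and K_{2^A}(x) = 0 otherwise, where K_m = (1/m) Σ_{k=0}^{m-1} D_k. -/
/-!
With the Rademacher functions `r_k x = (-1)^(x k)`, the Walsh function `w_m` is the product of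
the `r_k` over the binary digits of `m`, so `w_{2^A + m} = r_A w_m` for `m < 2^A`. Hence
`D_{2^A} = ∏_{k<A} (1 + r_k)`, which vanishes as soon as `x_t = 1` for some `t < A`. Summation
by parts gives `2^A K_{2^A} = (2^A - 1) D_{2^A} - ∑_{m<2^A} m w_m`, and splitting off the top
binary digit of `m` shows that, when `x_t = 1`,
`∑_{m<2^A} m w_m = -2^t ∏_{k<A, k≠t} (1 + r_k)`. So
`K_{2^A}(x) = 2^(t-A) ∏_{k<A, k≠t} (1 + r_k x)`, which is `2^(t-1)` on `I_A(e_t)` and `0` off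
it; the case `x ∈ I_A` cannot occur because `x_t = 1`.
-/

open Finset

/-- The dyadic group `G = (ℤ/2)^ℕ`. -/
abbrev G := ℕ → ZMod 2

/-- Walsh–Paley functions: `w n x = ∏ k, ((-1)^(x k))^(n_k)` for the binary expansion of `n`. -/
noncomputable def walsh (n : ℕ) (x : G) : ℝ :=
  ∏ k ∈ Finset.range (n + 1), if n.testBit k then (-1 : ℝ) ^ (x k).val else 1

/-- Walsh–Dirichlet kernels `D m = ∑_{k<m} w k`. -/
noncomputable def dirichlet (m : ℕ) (x : G) : ℝ :=
  ∑ k ∈ Finset.range m, walsh k x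

/-- Walsh–Fejér kernels `K n = (1/n) ∑_{k<n} D k`. -/
noncomputable def fejer (n : ℕ) (x : G) : ℝ :=
  (1 / (n : ℝ)) * ∑ k ∈ Finset.range n, dirichlet k x

/-- The cylinder set `I_N = {t : t_0 = ⋯ = t_{N-1} = 0}`. -/
def IN (N : ℕ) : Set G := {t | ∀ j < N, t j = 0}

noncomputable def rademacher (k : ℕ) (x : G) : ℝ :=
  (-1) ^ (x k).val

lemma one_add_rademacher (k : ℕ) (x : G) :
    1 + rademacher k x = if x k = 0 then 2 else 0 := by
  unfold rademacher
  obtain h | h : x k = 0 ∨ x k = 1 := by generalize x k = a; revert a; decide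
  · norm_num [h]
  · simp [h, ZMod.val_one]

lemma prod_one_add_rademacher (s : Finset ℕ) (x : G) :
    ∏ k ∈ s, (1 + rademacher k x) = if ∀ k ∈ s, x k = 0 then 2 ^ #s else 0 := by
  simp only [one_add_rademacher, prod_ite_zero, prod_const]

lemma walsh_eq_prod_range {m N : ℕ} (h : m < N) (x : G) :
    walsh m x = ∏ k ∈ range N, if m.testBit k then rademacher k x else 1 := by
  refine prod_subset (range_subset_range.2 h) fun k _ hk => ?_
  have hmk : m < 2 ^ k :=
    Nat.lt_two_pow_self.trans_le (Nat.pow_le_pow_right two_pos (by simp at hk; omega))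
  simp [Nat.testBit_eq_false_of_lt hmk]

lemma walsh_two_pow_add {A m : ℕ} (hm : m < 2 ^ A) (x : G) :
    walsh (2 ^ A + m) x = rademacher A x * walsh m x := by
  have hA : A ∈ range (2 ^ A + m + 1) := mem_range.2 (by have := @Nat.lt_two_pow_self A; omega)
  rw [walsh_eq_prod_range (lt_add_one _), walsh_eq_prod_range (by omega : m < 2 ^ A + m + 1),
    ← mul_prod_erase _ _ hA, ← mul_prod_erase _ _ hA]
  have hmA : m.testBit A = false := Nat.testBit_eq_false_of_lt hm
  rw [Nat.testBit_two_pow_add_eq, hmA]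
  simp only [Bool.not_false, if_true, Bool.false_eq_true, if_false, one_mul]
  refine congrArg _ (prod_congr rfl fun k hk => ?_)
  rcases lt_or_gt_of_ne (ne_of_mem_erase hk) with hkA | hkA
  · rw [Nat.testBit_two_pow_add_gt hkA]
  · have hm' : 2 ^ A + m < 2 ^ k :=
      calc 2 ^ A + m < 2 ^ (A + 1) := by rw [pow_succ]; omega
        _ ≤ 2 ^ k := Nat.pow_le_pow_right two_pos hkA
    rw [Nat.testBit_eq_false_of_lt hm', Nat.testBit_eq_false_of_lt (by omega : m < 2 ^ k)]

lemma sum_range_two_pow_succ {M : Type*} [AddCommMonoid M] (f : ℕ → M) (B : ℕ) :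
    ∑ m ∈ range (2 ^ (B + 1)), f m = ∑ m ∈ range (2 ^ B), (f m + f (2 ^ B + m)) := by
  rw [pow_succ, mul_two, sum_range_add, sum_add_distrib]

lemma dirichlet_two_pow (A : ℕ) (x : G) :
    dirichlet (2 ^ A) x = ∏ k ∈ range A, (1 + rademacher k x) := by
  induction A with
  | zero => simp [dirichlet, walsh]
  | succ B ih =>
    rw [prod_range_succ, ← ih, dirichlet, sum_range_two_pow_succ, dirichlet, mul_add, mul_one,
      mul_comm, mul_sum, sum_add_distrib]
    congr 1
    exact sum_congr rfl fun m hm => walsh_two_pow_add (mem_range.1 hm) x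

lemma dirichlet_two_pow_eq_zero {A t : ℕ} (ht : t < A) {x : G} (hx : x t = 1) :
    dirichlet (2 ^ A) x = 0 := by
  rw [dirichlet_two_pow, prod_one_add_rademacher,
    if_neg fun h => by simp [h t (mem_range.2 ht)] at hx]

lemma sum_range_dirichlet (n : ℕ) (x : G) :
    ∑ k ∈ range n, dirichlet k x
      = ((n : ℝ) - 1) * dirichlet n x - ∑ m ∈ range n, m * walsh m x := by
  induction n with
  | zero => simp [dirichlet]
  | succ n ih =>
    rw [sum_range_succ, ih, dirichlet, dirichlet, sum_range_succ, sum_range_succ]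
    push_cast
    ring

lemma sum_range_two_pow_succ_mul_walsh (B : ℕ) (x : G) :
    ∑ m ∈ range (2 ^ (B + 1)), m * walsh m x
      = (1 + rademacher B x) * ∑ m ∈ range (2 ^ B), m * walsh m x
        + 2 ^ B * rademacher B x * dirichlet (2 ^ B) x := by
  rw [sum_range_two_pow_succ, dirichlet, mul_sum, mul_sum, ← sum_add_distrib]
  refine sum_congr rfl fun m hm => ?_
  rw [walsh_two_pow_add (mem_range.1 hm)]
  push_cast
  ring

lemma sum_range_two_pow_mul_walsh {B t : ℕ} (ht : t < B) {x : G} (hx : x t = 1) :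
    ∑ m ∈ range (2 ^ B), m * walsh m x
      = -2 ^ t * ∏ k ∈ (range B).erase t, (1 + rademacher k x) := by
  induction B, ht using Nat.le_induction with
  | base =>
    rw [sum_range_two_pow_succ_mul_walsh, dirichlet_two_pow, range_add_one,
      erase_insert notMem_range_self, one_add_rademacher, rademacher, hx]
    simp [ZMod.val_one]
  | succ B htB ih =>
    rw [sum_range_two_pow_succ_mul_walsh, ih, dirichlet_two_pow_eq_zero htB hx, range_add_one,
      erase_insert_of_ne (by omega), prod_insert (by simp)]
    ring

lemma fejer_two_pow_of_eq_one {A t : ℕ} (ht : t < A) {x : G} (hx : x t = 1) :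
    fejer (2 ^ A) x = 2 ^ t / 2 ^ A * ∏ k ∈ (range A).erase t, (1 + rademacher k x) := by
  rw [fejer, sum_range_dirichlet, dirichlet_two_pow_eq_zero ht hx,
    sum_range_two_pow_mul_walsh ht hx]
  push_cast
  ring

theorem gat_fejer_kernel_general (A t : ℕ) (hAt : t < A) (x : G)
    (hx2 : x t = 1) :
    ((∀ j < A, j ≠ t → x j = 0) → fejer (2 ^ A) x = (2 : ℝ) ^ ((t : ℤ) - 1)) ∧
    ((∀ j < A, x j = 0) → fejer (2 ^ A) x = ((2 : ℝ) ^ A + 1) / 2) ∧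
    (¬ (∀ j < A, j ≠ t → x j = 0) → ¬ (∀ j < A, x j = 0) → fejer (2 ^ A) x = 0) := by
  have hIt : (∀ k ∈ (range A).erase t, x k = 0) ↔ ∀ j < A, j ≠ t → x j = 0 := by
    simp only [mem_erase, mem_range, and_imp]
    exact forall_congr' fun j => forall_comm
  rw [fejer_two_pow_of_eq_one hAt hx2, prod_one_add_rademacher,
    card_erase_of_mem (mem_range.2 hAt), card_range]
  refine ⟨fun h => ?_, fun h => absurd hx2 (by simp [h t hAt]),
    fun h _ => by rw [if_neg (mt hIt.1 h), mul_zero]⟩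
  rw [if_pos (hIt.2 h), div_mul_eq_mul_div, ← pow_add, div_eq_iff (by positivity),
    ← zpow_natCast, ← zpow_natCast, ← zpow_add₀ two_ne_zero]
  congr 1
  omega

/-- **Gát's formula for the dyadic Fejér kernel.** Let `t < A` and `x ∈ I_t \ I_{t+1}`.
Then `K_{2^A}(x) = 2^{t-1}` if `x ∈ I_A(e_t)`, `K_{2^A}(x) = (2^A+1)/2` if `x ∈ I_A`,
and `K_{2^A}(x) = 0` otherwise. -/
theorem gat_fejer_kernel (A t : ℕ) (hAt : t < A) (x : G)
    (hx1 : ∀ j < t, x j = 0) (hx2 : x t = 1) :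
    ((∀ j < A, j ≠ t → x j = 0) → fejer (2 ^ A) x = (2 : ℝ) ^ ((t : ℤ) - 1)) ∧
    ((∀ j < A, x j = 0) → fejer (2 ^ A) x = ((2 : ℝ) ^ A + 1) / 2) ∧
    (¬ (∀ j < A, j ≠ t → x j = 0) → ¬ (∀ j < A, x j = 0) → fejer (2 ^ A) x = 0) :=
  gat_fejer_kernel_general A t hAt x hx2
end

section
/- For any positive integers N and n with n > 2^N, and for x with x_k = 1 and x_j = 0 for all j < N, j ≠ k (for some 0 ≤ k ≤ N−1), the Walsh–Fejér kernel satisfies ∫_{I_N} |K_n(x − t)| dμ(t) ≤ c · 2^k / 2^N for an absolute constant c, where I_N = {t : t_0 = ... = t_{N-1} = 0} and x − t denotes coordinatewise addition mod 2. -/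
open Finset

open MeasureTheory

instance : TopologicalSpace (ZMod 2) := ⊥
instance : DiscreteTopology (ZMod 2) := ⟨rfl⟩
instance : MeasurableSpace G := borel G
instance : BorelSpace G := ⟨rfl⟩

/-- The normalized Haar measure on the compact group `G`. -/
noncomputable def haarG : Measure G :=
  Measure.addHaarMeasure ⟨⟨Set.univ, isCompact_univ⟩, by simp⟩

/-!
If `y k = 1`, the Walsh functions `w (2^(k+1) q + 2^k + i)` and `w (2^(k+1) q + i)` differ by the
factor `(-1)^(y k) = -1`, so Walsh sums over complete blocks of length `2^(k+1)` vanish. Hence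
`|D_m y| ≤ 2^(k+1)` for every `m`, and averaging gives `|K_n y| ≤ 2^(k+1)`. For `t ∈ I_N` the point
`x - t` still has `k`-th coordinate `1`, and `I_N` is the kernel of the projection of `G` onto its
first `N` coordinates, a subgroup of index `2^N`, so `μ(I_N) = 2^(-N)`. This gives the estimate
with `c = 2`.
-/

lemma walsh_eq_prod_range_s7 {n M : ℕ} (h : n < M) (x : G) :
    walsh n x = ∏ j ∈ range M, if n.testBit j then (-1 : ℝ) ^ (x j).val else 1 := by
  refine prod_subset (range_subset_range.2 h) fun j _ hjn => ?_
  rw [mem_range, not_lt] at hjn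
  have hn : n < 2 ^ j := Nat.lt_two_pow_self.trans_le (Nat.pow_le_pow_right two_pos (by omega))
  simp [Nat.testBit_lt_two_pow hn]

lemma abs_walsh_le_one (n : ℕ) (x : G) : |walsh n x| ≤ 1 := by
  rw [walsh, abs_prod]
  refine prod_le_one (fun _ _ => abs_nonneg _) fun j _ => ?_
  split <;> simp

lemma walsh_two_pow_mul_add (c q : ℕ) {i : ℕ} (hi : i < 2 ^ c) (x : G) :
    walsh (2 ^ c * q + i) x = walsh (2 ^ c * q) x * walsh i x := by
  have hq : 2 ^ c * q < 2 ^ c * q + i + 1 := by omega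
  rw [walsh_eq_prod_range_s7 (lt_add_one _), walsh_eq_prod_range_s7 hq,
    walsh_eq_prod_range_s7 (show i < 2 ^ c * q + i + 1 by omega), ← prod_mul_distrib]
  refine prod_congr rfl fun j _ => ?_
  rw [Nat.testBit_two_pow_mul_add q hi, Nat.testBit_two_pow_mul]
  rcases lt_or_ge j c with hjc | hcj
  · simp [hjc, not_le.2 hjc]
  · have hi' : i < 2 ^ j := hi.trans_le (Nat.pow_le_pow_right two_pos hcj)
    simp [not_lt.2 hcj, hcj, Nat.testBit_lt_two_pow hi']

lemma walsh_two_pow (c : ℕ) (x : G) : walsh (2 ^ c) x = (-1 : ℝ) ^ (x c).val := by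
  rw [walsh, prod_eq_single_of_mem c (mem_range.2 (Nat.lt_two_pow_self.trans (lt_add_one _)))]
  · simp
  · intro j _ hjc
    simp [Nat.testBit_two_pow_of_ne (Ne.symm hjc)]

section SpikeAtK

variable {k : ℕ} {y : G}

lemma sum_range_two_pow_succ_walsh (hk : y k = 1) :
    ∑ i ∈ range (2 ^ (k + 1)), walsh i y = 0 := by
  have hsecond : ∀ i ∈ range (2 ^ k), walsh (2 ^ k + i) y = -walsh i y := fun i hi => by
    have hval : (y k).val = 1 := by rw [hk]; rfl
    simpa [walsh_two_pow, hval] using walsh_two_pow_mul_add k 1 (mem_range.1 hi) y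
  rw [pow_succ, mul_two, sum_range_add, sum_congr rfl hsecond, sum_neg_distrib, add_neg_cancel]

lemma sum_range_two_pow_succ_mul_walsh_s7 (hk : y k = 1) (q : ℕ) :
    ∑ i ∈ range (2 ^ (k + 1) * q), walsh i y = 0 := by
  induction q with
  | zero => simp
  | succ q ih =>
    have hblock : ∀ i ∈ range (2 ^ (k + 1)),
        walsh (2 ^ (k + 1) * q + i) y = walsh (2 ^ (k + 1) * q) y * walsh i y :=
      fun i hi => walsh_two_pow_mul_add (k + 1) q (mem_range.1 hi) y
    rw [mul_add_one, sum_range_add, ih, sum_congr rfl hblock, ← mul_sum,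
      sum_range_two_pow_succ_walsh hk, mul_zero, add_zero]

lemma abs_dirichlet_le (hk : y k = 1) (m : ℕ) : |dirichlet m y| ≤ 2 ^ (k + 1) := by
  set L := 2 ^ (k + 1)
  rw [dirichlet, ← Nat.div_add_mod m L, sum_range_add, sum_range_two_pow_succ_mul_walsh_s7 hk,
    zero_add]
  calc |∑ i ∈ range (m % L), walsh (L * (m / L) + i) y|
      ≤ ∑ i ∈ range (m % L), |walsh (L * (m / L) + i) y| := abs_sum_le_sum_abs _ _
    _ ≤ ∑ _i ∈ range (m % L), (1 : ℝ) := sum_le_sum fun i _ => abs_walsh_le_one _ _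
    _ ≤ 2 ^ (k + 1) := by
      rw [sum_const, card_range, nsmul_one]
      exact_mod_cast (Nat.mod_lt m (Nat.two_pow_pos _)).le

lemma abs_fejer_le (hk : y k = 1) (n : ℕ) : |fejer n y| ≤ 2 ^ (k + 1) := by
  rw [fejer, abs_mul, abs_of_nonneg (by positivity)]
  calc 1 / (n : ℝ) * |∑ m ∈ range n, dirichlet m y|
      ≤ 1 / n * (n * 2 ^ (k + 1)) := by
        gcongr
        refine (abs_sum_le_sum_abs _ _).trans ?_
        simpa using sum_le_card_nsmul (range n) _ _ fun m _ => abs_dirichlet_le hk m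
    _ ≤ 2 ^ (k + 1) := by
      rcases eq_or_ne n 0 with rfl | hn
      · simp
      · rw [← mul_assoc, one_div_mul_cancel (Nat.cast_ne_zero.2 hn), one_mul]

end SpikeAtK

instance : haarG.IsAddHaarMeasure := by
  unfold haarG
  infer_instance

lemma haarG_univ : haarG Set.univ = 1 :=
  Measure.addHaarMeasure_self (K₀ := ⟨⟨Set.univ, isCompact_univ⟩, by simp⟩)

def truncate (N : ℕ) : G →+ (Fin N → ZMod 2) :=
  AddMonoidHom.pi fun j => Pi.evalAddMonoidHom _ (j : ℕ)

lemma truncate_surjective (N : ℕ) : Function.Surjective (truncate N) := fun v =>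
  ⟨fun j => if h : j < N then v ⟨j, h⟩ else 0, funext fun j => by simp [truncate]⟩

lemma coe_ker_truncate (N : ℕ) : ((truncate N).ker : Set G) = IN N := by
  ext t
  simp [IN, truncate, funext_iff, Fin.forall_iff]

lemma index_ker_truncate (N : ℕ) : (truncate N).ker.index = 2 ^ N := by
  rw [AddSubgroup.index_ker, AddMonoidHom.range_eq_top.2 (truncate_surjective N),
    AddSubgroup.card_top]
  simp

lemma measureReal_haarG_IN (N : ℕ) : haarG.real (IN N) = (2 ^ N)⁻¹ := by
  have : (truncate N).ker.FiniteIndex := ⟨by simp [index_ker_truncate]⟩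
  have hclosed : IsClosed (IN N) := by
    rw [← coe_ker_truncate]
    exact isClosed_eq (continuous_pi fun j => continuous_apply _) continuous_const
  have h := AddSubgroup.index_mul_measure _ (coe_ker_truncate N ▸ hclosed.measurableSet) haarG
  rw [index_ker_truncate, coe_ker_truncate, haarG_univ] at h
  have hμ : haarG (IN N) = (2 ^ N)⁻¹ :=
    ENNReal.eq_inv_of_mul_eq_one_left (by rw [mul_comm]; exact_mod_cast h)
  rw [measureReal_def, hμ]
  simp

/-- **Fejér kernel integral estimate (single spike case).** There is an absolute constant `c`
such that for all positive integers `N`, `n` with `n > 2^N`, `0 ≤ k ≤ N−1`, and all `x ∈ G`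
with `x_k = 1` and `x_j = 0` for all `j < N`, `j ≠ k`:
`∫_{I_N} |K_n(x − t)| dμ(t) ≤ c · 2^k / 2^N`. -/
theorem fejer_integral_estimate_single :
    ∃ c : ℝ, 0 < c ∧ ∀ (N n k : ℕ) (x : G), 1 ≤ N → 2 ^ N < n → k ≤ N - 1 →
      x k = 1 → (∀ j < N, j ≠ k → x j = 0) →
      ∫ t in IN N, |fejer n (x - t)| ∂haarG ≤ c * 2 ^ k / 2 ^ N := by
  refine ⟨2, two_pos, fun N n k x hN _ hk hxk _ => ?_⟩
  have hbound : ∀ t ∈ IN N, ‖|fejer n (x - t)|‖ ≤ 2 ^ (k + 1) := fun t ht => by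
    rw [norm_abs_eq_norm, Real.norm_eq_abs]
    exact abs_fejer_le (by simp [ht k (by omega), hxk]) n
  calc ∫ t in IN N, |fejer n (x - t)| ∂haarG
      ≤ ‖∫ t in IN N, |fejer n (x - t)| ∂haarG‖ := le_abs_self _
    _ ≤ 2 ^ (k + 1) * haarG.real (IN N) :=
      norm_setIntegral_le_of_norm_le_const (measure_lt_top _ _) hbound
    _ = 2 * 2 ^ k / 2 ^ N := by rw [measureReal_haarG_IN]; ring
end
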